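/- Every complex solution of the equation tan(z) = z is real, i.e. if z ∈ ℂ, cos(z) ≠ 0, and sin(z) = z·cos(z), then the imaginary part of z is zero. -/

import Mathlib

/-!
Write `z = x + y i` and `D = cos 2x + cosh 2y = 2 |cos z|²`. Multiplying `sin z = z cos z` by
`conj (cos z)` and using the product-to-sum formulas gives the real equations `sin 2x = x D` and
`sinh 2y = y D`. If `y ≠ 0`, then `|sinh 2y| > |2y|` forces `D > 2`, and then `|sin 2x| < |2x|`
forces `x = 0`. On the imaginary axis the equation reads `sinh y = y cosh y`, i.e. `tanh y = y`,
which has no nonzero solution because `u cosh u - sinh u` is strictly increasing.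
-/

open ComplexConjugate

namespace Real

lemma mul_sin_lt_sq {a : ℝ} (ha : a ≠ 0) : a * sin a < a ^ 2 :=
  calc a * sin a ≤ |a| * |sin a| := by rw [← abs_mul]; exact le_abs_self _
    _ < |a| * |a| := by gcongr; exact abs_sin_lt_abs ha
    _ = a ^ 2 := by rw [abs_mul_abs_self, sq]

lemma sq_lt_mul_sinh {b : ℝ} (hb : b ≠ 0) : b ^ 2 < b * sinh b := by
  rcases hb.lt_or_gt with hneg | hpos
  · nlinarith [sinh_lt_self_iff.2 hneg]
  · nlinarith [self_lt_sinh_iff.2 hpos]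

lemma sinh_lt_mul_cosh {t : ℝ} (ht : 0 < t) : sinh t < t * cosh t := by
  have hmono : StrictMonoOn (fun u => u * cosh u - sinh u) (Set.Ici 0) := by
    refine strictMonoOn_of_deriv_pos (convex_Ici 0) (by fun_prop) fun u hu => ?_
    rw [interior_Ici, Set.mem_Ioi] at hu
    have hderiv : HasDerivAt (fun u => u * cosh u - sinh u) (u * sinh u) u :=
      (((hasDerivAt_id' u).mul (hasDerivAt_cosh u)).sub (hasDerivAt_sinh u)).congr_deriv
        (by ring)
    rw [hderiv.deriv]
    exact mul_pos hu (sinh_pos_iff.2 hu)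
  simpa using hmono Set.self_mem_Ici ht.le ht

lemma sinh_ne_mul_cosh {y : ℝ} (hy : y ≠ 0) : sinh y ≠ y * cosh y := by
  rcases hy.lt_or_gt with hneg | hpos
  · have := sinh_lt_mul_cosh (neg_pos.2 hneg)
    rw [sinh_neg, cosh_neg] at this
    linarith
  · exact (sinh_lt_mul_cosh hpos).ne

end Real

namespace Complex

lemma two_mul_sin_mul_conj_cos (z : ℂ) :
    2 * (sin z * conj (cos z)) = Real.sin (2 * z.re) + Real.sinh (2 * z.im) * I := by
  have hsum : 2 * (sin z * cos (conj z)) = sin (z + conj z) + sin (z - conj z) := by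
    rw [sin_add, sin_sub]; ring
  rw [← cos_conj, hsum, add_conj, sub_conj, sin_mul_I, ofReal_sin, ofReal_sinh]

lemma two_mul_normSq_cos (z : ℂ) :
    2 * normSq (cos z) = Real.cos (2 * z.re) + Real.cosh (2 * z.im) := by
  have hsum : 2 * (cos z * cos (conj z)) = cos (z + conj z) + cos (z - conj z) := by
    rw [cos_add, cos_sub]; ring
  have hcomplex : (2 * normSq (cos z) : ℂ) = Real.cos (2 * z.re) + Real.cosh (2 * z.im) := by
    rw [← mul_conj, ← cos_conj, hsum, add_conj, sub_conj, cos_mul_I, ofReal_cos, ofReal_cosh]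
  exact_mod_cast hcomplex

end Complex

theorem stmt9_general (z : ℂ)
    (h : Complex.sin z = z * Complex.cos z) : z.im = 0 := by
  by_contra hy
  have hconj : (Real.sin (2 * z.re) + Real.sinh (2 * z.im) * Complex.I : ℂ) =
      z * (2 * Complex.normSq (Complex.cos z) : ℝ) := by
    rw [← Complex.two_mul_sin_mul_conj_cos, h, Complex.ofReal_mul, ← Complex.mul_conj]
    push_cast; ring
  set D := 2 * Complex.normSq (Complex.cos z)
  have hre : Real.sin (2 * z.re) = z.re * D := by
    simpa [-Complex.ofReal_sin, -Complex.ofReal_sinh] using congrArg Complex.re hconj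
  have him : Real.sinh (2 * z.im) = z.im * D := by
    simpa [-Complex.ofReal_sin, -Complex.ofReal_sinh] using congrArg Complex.im hconj
  have hD : 2 < D := by
    have hsinh_bound := Real.sq_lt_mul_sinh (mul_ne_zero two_ne_zero hy)
    rw [him] at hsinh_bound
    nlinarith [sq_pos_of_ne_zero hy]
  have hre0 : z.re = 0 := by
    by_contra hx
    have hsin_bound := Real.mul_sin_lt_sq (mul_ne_zero two_ne_zero hx)
    rw [hre] at hsin_bound
    nlinarith [sq_pos_of_ne_zero hx]
  have hsinh : Real.sinh z.im = z.im * Real.cosh z.im := by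
    have hz_axis : z = z.im * Complex.I := by simpa [hre0] using (Complex.re_add_im z).symm
    rw [hz_axis, Complex.sin_mul_I, Complex.cos_mul_I] at h
    have hcomplex : (Complex.sinh z.im : ℂ) = z.im * Complex.cosh z.im :=
      mul_right_cancel₀ Complex.I_ne_zero (h.trans (by ring))
    exact_mod_cast hcomplex
  exact Real.sinh_ne_mul_cosh hy hsinh

theorem stmt9 (z : ℂ) (hz : Complex.cos z ≠ 0)
    (h : Complex.sin z = z * Complex.cos z) : z.im = 0 :=
  stmt9_general z h
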